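/- arXiv:0805.0180 — 11 statements merged into one kernel-verified Lean document; each statement's English description precedes it below -/
import Mathlib

section
/- If ν₁ ≥ ν₂ ≥ ν₃ are real numbers with ν₁ + ν₂ + ν₃ = 0, then ν₁ ≥ 0 ≥ ν₃, and setting μ = −ν₂ and λ = √(−ν₁ν₃), the matrix X_{μλ} = !![μ,0,λ; 0,−μ,0; λ,0,0] has characteristic polynomial (ν₂−x)(x−ν₁)(x−ν₃), hence eigenvalues ν₁, ν₂, ν₃. -/
open Matrix

theorem stmt2 (ν₁ ν₂ ν₃ : ℝ) (h12 : ν₁ ≥ ν₂) (h23 : ν₂ ≥ ν₃)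
    (hsum : ν₁ + ν₂ + ν₃ = 0) :
    ν₁ ≥ 0 ∧ 0 ≥ ν₃ ∧
    (∀ x : ℝ,
      (!![-ν₂, 0, Real.sqrt (-(ν₁ * ν₃)); 0, ν₂, 0; Real.sqrt (-(ν₁ * ν₃)), 0, 0]
        - x • (1 : Matrix (Fin 3) (Fin 3) ℝ)).det
      = (ν₂ - x) * (x - ν₁) * (x - ν₃)) := by
  have h1 : ν₁ ≥ 0 := by linarith
  have h3 : 0 ≥ ν₃ := by linarith
  refine ⟨h1, h3, fun x => ?_⟩
  have hs : Real.sqrt (-(ν₁ * ν₃)) * Real.sqrt (-(ν₁ * ν₃)) = -(ν₁ * ν₃) :=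
    Real.mul_self_sqrt (by nlinarith)
  have h2 : ν₂ = -(ν₁ + ν₃) := by linarith
  simp [det_fin_three, Matrix.smul_apply, Matrix.one_apply, Matrix.vecHead, Matrix.vecTail]
  subst h2
  linear_combination (x + ν₁ + ν₃) * hs
end

section
/- Two trace-free symmetric real 3×3 matrices are conjugate under SO(3) if and only if u₁ and u₂ agree on them, where u₁(X) = tr(X²) and u₂(X) = det X. Equivalently, the level sets of (u₁, u₂) on trace-free symmetric 3×3 matrices are single SO(3)-orbits. -/
/-!
Orthogonal conjugation preserves `tr (X²)` and `det X`. Conversely, for a trace-free `3 × 3`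
matrix these two numbers determine the characteristic polynomial (the middle coefficient is
`(tr² X - tr X²) / 2`), and real symmetric matrices with the same characteristic polynomial have
the same sorted eigenvalues, hence are conjugate by an orthogonal matrix. In odd dimension `-k`
conjugates like `k` and has the opposite determinant, so the conjugating matrix can be taken in
`SO(3)`.
-/

open Matrix Polynomial

namespace Matrix

variable {n R : Type*} [Fintype n] [DecidableEq n] [CommRing R]

theorem charpoly_fin_three [Invertible (2 : R)] (A : Matrix (Fin 3) (Fin 3) R) :
    A.charpoly =
      X ^ 3 - C A.trace * X ^ 2 + C (⅟2 * (A.trace ^ 2 - (A * A).trace)) * X - C A.det := by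
  have h2 : C (⅟2 : R) * 2 = 1 := by rw [← C_ofNat, ← C_mul, invOf_mul_self, C_1]
  simp only [charpoly, det_fin_three, charmatrix_apply_eq, ne_eq, Fin.reduceEq, not_false_eq_true,
    charmatrix_apply_ne, mul_neg, neg_mul, neg_neg, trace_fin_three, mul_apply, Fin.sum_univ_three,
    map_add, map_mul, map_sub, map_pow]
  linear_combination (-X) * (C (A 0 0) * C (A 1 1) + C (A 0 0) * C (A 2 2) + C (A 1 1) * C (A 2 2)
    - C (A 0 1) * C (A 1 0) - C (A 0 2) * C (A 2 0) - C (A 1 2) * C (A 2 1)) * h2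

theorem trace_conj_mul_self_of_mul_transpose_eq_one {k : Matrix n n R} (hk : k * kᵀ = 1)
    (A : Matrix n n R) : (k * A * kᵀ * (k * A * kᵀ)).trace = (A * A).trace := by
  have hk' : kᵀ * k = 1 := mul_eq_one_comm.mp hk
  calc (k * A * kᵀ * (k * A * kᵀ)).trace = (k * (A * (kᵀ * k) * A) * kᵀ).trace := by
        simp only [Matrix.mul_assoc]
    _ = (kᵀ * k * (A * A)).trace := by rw [trace_mul_cycle, hk', Matrix.mul_one]
    _ = (A * A).trace := by rw [hk', Matrix.one_mul]

theorem exists_det_eq_one_of_mul_transpose_eq_one [NoZeroDivisors R] (hn : Odd (Fintype.card n))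
    {A B k : Matrix n n R} (hk : k * kᵀ = 1) (hkAB : k * A * kᵀ = B) :
    ∃ k' : Matrix n n R, k' * k'ᵀ = 1 ∧ k'.det = 1 ∧ k' * A * k'ᵀ = B := by
  have hdet : k.det * k.det = 1 := by
    simpa only [det_mul, det_transpose, det_one] using congrArg det hk
  rcases mul_self_eq_one_iff.mp hdet with hdet | hdet
  · exact ⟨k, hk, hdet, hkAB⟩
  · refine ⟨-k, ?_, ?_, ?_⟩
    · simpa only [transpose_neg, neg_mul_neg] using hk
    · rw [det_neg, hn.neg_one_pow, hdet, neg_one_mul, neg_neg]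
    · simpa only [transpose_neg, neg_mul, mul_neg, neg_neg] using hkAB

theorem IsHermitian.exists_mul_transpose_eq_one_eq_conj_diagonal {A : Matrix n n ℝ}
    (hA : A.IsHermitian) :
    ∃ U : Matrix n n ℝ, U * Uᵀ = 1 ∧ A = U * diagonal hA.eigenvalues * Uᵀ := by
  refine ⟨hA.eigenvectorUnitary, ?_, ?_⟩
  · simpa only [star_eq_conjTranspose, conjTranspose_eq_transpose_of_trivial] using
      mem_unitaryGroup_iff.mp hA.eigenvectorUnitary.2
  · simpa only [Unitary.conjStarAlgAut_apply, star_eq_conjTranspose,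
      conjTranspose_eq_transpose_of_trivial, RCLike.ofReal_real_eq_id, Function.id_comp] using
      hA.spectral_theorem

theorem IsHermitian.exists_mul_transpose_eq_one_conj_eq_of_charpoly_eq {A B : Matrix n n ℝ}
    (hA : A.IsHermitian) (hB : B.IsHermitian) (h : A.charpoly = B.charpoly) :
    ∃ k : Matrix n n ℝ, k * kᵀ = 1 ∧ k * A * kᵀ = B := by
  obtain ⟨U, hU, hAU⟩ := hA.exists_mul_transpose_eq_one_eq_conj_diagonal
  obtain ⟨V, hV, hBV⟩ := hB.exists_mul_transpose_eq_one_eq_conj_diagonal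
  have hU' : Uᵀ * U = 1 := mul_eq_one_comm.mp hU
  rw [(eigenvalues_eq_eigenvalues_iff hA hB).mpr h] at hAU
  refine ⟨V * Uᵀ, ?_, ?_⟩
  · rw [transpose_mul, transpose_transpose, Matrix.mul_assoc, ← Matrix.mul_assoc Uᵀ, hU',
      Matrix.one_mul, hV]
  · calc V * Uᵀ * A * (V * Uᵀ)ᵀ = V * (Uᵀ * U) * diagonal hB.eigenvalues * (Uᵀ * U) * Vᵀ := by
          rw [hAU]; simp only [transpose_mul, transpose_transpose, Matrix.mul_assoc]
      _ = B := by rw [hU', Matrix.mul_one, Matrix.mul_one]; exact hBV.symm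

end Matrix

theorem stmt3 (X Y : Matrix (Fin 3) (Fin 3) ℝ)
    (hX : Xᵀ = X) (hXtr : X.trace = 0) (hY : Yᵀ = Y) (hYtr : Y.trace = 0) :
    (∃ k : Matrix (Fin 3) (Fin 3) ℝ, k * kᵀ = 1 ∧ k.det = 1 ∧ k * X * kᵀ = Y) ↔
      (X * X).trace = (Y * Y).trace ∧ X.det = Y.det := by
  constructor
  · rintro ⟨k, hk, -, rfl⟩
    exact ⟨(trace_conj_mul_self_of_mul_transpose_eq_one hk X).symm,
      (det_conj_of_mul_eq_one hk (mul_eq_one_comm.mp hk)).symm⟩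
  · rintro ⟨htr, hdet⟩
    have hXh : X.IsHermitian := isHermitian_iff_isSymm.mpr hX
    have hYh : Y.IsHermitian := isHermitian_iff_isSymm.mpr hY
    have hchar : X.charpoly = Y.charpoly := by
      rw [charpoly_fin_three, charpoly_fin_three, hXtr, hYtr, htr, hdet]
    obtain ⟨k, hk, hkXY⟩ := hXh.exists_mul_transpose_eq_one_conj_eq_of_charpoly_eq hYh hchar
    exact exists_det_eq_one_of_mul_transpose_eq_one (by decide) hk hkXY
end

section
/- Let f₁(x,y) = 2(x² + y² + xy) and f₂(x,y) = −xy(x+y). Then for all (x,y) ∈ ℝ² with f₁(x,y) = 1, one has |f₂(x,y)| ≤ 54^(−1/2), with equality if and only if two of the three numbers x, y, −x−y are equal. -/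
theorem stmt5 (x y : ℝ) (h : 2 * (x ^ 2 + y ^ 2 + x * y) = 1) :
    |(-(x * y * (x + y)))| ≤ (Real.sqrt 54)⁻¹ ∧
    (|(-(x * y * (x + y)))| = (Real.sqrt 54)⁻¹ ↔
      (x = y ∨ y = -x - y ∨ x = -x - y)) := by
  set s := x * y * (x + y) with hs
  have key : 2 * ((x - y) ^ 2 * (x + 2 * y) ^ 2 * (2 * x + y) ^ 2) = 1 - 54 * s ^ 2 := by
    have c := h
    linear_combination (4 * (x ^ 2 + y ^ 2 + x * y) ^ 2 + 2 * (x ^ 2 + y ^ 2 + x * y) + 1) * h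
  have hsq : s ^ 2 ≤ (54 : ℝ)⁻¹ := by nlinarith [sq_nonneg ((x - y) * (x + 2 * y) * (2 * x + y))]
  have hinv : (Real.sqrt 54)⁻¹ = Real.sqrt (54 : ℝ)⁻¹ := (Real.sqrt_inv 54).symm
  have habs : |(-s)| = Real.sqrt (s ^ 2) := by
    rw [Real.sqrt_sq_eq_abs, abs_neg]
  constructor
  · rw [habs, hinv]
    exact Real.sqrt_le_sqrt hsq
  · rw [habs, hinv]
    constructor
    · intro he
      have h2 : s ^ 2 = (54 : ℝ)⁻¹ := by
        have := congrArg (· ^ 2) he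
        simpa [Real.sq_sqrt (sq_nonneg s), Real.sq_sqrt (by norm_num : ((54:ℝ)⁻¹) ≥ 0)] using this
      have h0 : (x - y) ^ 2 * (x + 2 * y) ^ 2 * (2 * x + y) ^ 2 = 0 := by nlinarith
      rcases mul_eq_zero.mp h0 with h1 | h1
      · rcases mul_eq_zero.mp h1 with h1 | h1
        · left; have := pow_eq_zero_iff (n := 2) (by norm_num) |>.mp h1; linarith
        · right; left; have := pow_eq_zero_iff (n := 2) (by norm_num) |>.mp h1; linarith
      · right; right; have := pow_eq_zero_iff (n := 2) (by norm_num) |>.mp h1; linarith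
    · rintro (h1 | h1 | h1)
      · have hd : x - y = 0 := by linarith
        have h2 : s ^ 2 = (54 : ℝ)⁻¹ := by
          linear_combination (1/54 : ℝ) * key - (1/27 : ℝ) * ((x - y) * (x + 2*y)^2 * (2*x + y)^2) * hd
        rw [h2]
      · have hd : x + 2 * y = 0 := by linarith
        have h2 : s ^ 2 = (54 : ℝ)⁻¹ := by
          linear_combination (1/54 : ℝ) * key - (1/27 : ℝ) * ((x + 2*y) * (x - y)^2 * (2*x + y)^2) * hd
        rw [h2]
      · have hd : 2 * x + y = 0 := by linarith
        have h2 : s ^ 2 = (54 : ℝ)⁻¹ := by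
          linear_combination (1/54 : ℝ) * key - (1/27 : ℝ) * ((2*x + y) * (x - y)^2 * (x + 2*y)^2) * hd
        rw [h2]
end

section
/- For every trace-free symmetric real 3×3 matrix X, one has |det X| ≤ 54^(−1/2) · (tr(X²))^(3/2), with equality if and only if X has a repeated eigenvalue. -/
open Matrix Polynomial

/-!
Diagonalise `X` orthogonally, with eigenvalues `a, b, c`. Then `a + b + c = 0`,
`tr (X²) = a² + b² + c²` and `det X = abc`, and under `a + b + c = 0`
`(a² + b² + c²)³ = 54 (abc)² + 2 ((b - a)(c - a)(c - b))²`,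
the last term being twice the discriminant of the characteristic polynomial. So the bound holds,
with equality iff two eigenvalues coincide, i.e. iff the characteristic polynomial has a double root.
-/

theorem Polynomial.exists_sq_dvd_prod_multiset_X_sub_C_iff {R : Type*} [CommRing R] [IsDomain R]
    (s : Multiset R) : (∃ t, (X - C t) ^ 2 ∣ (s.map fun a => X - C a).prod) ↔ ¬ s.Nodup := by
  classical
  have hne : (s.map fun a => X - C a).prod ≠ 0 := (monic_multiset_prod_of_monic _ _
    fun a _ => monic_X_sub_C a).ne_zero
  simp_rw [← le_rootMultiplicity_iff hne, ← count_roots, roots_multiset_prod_X_sub_C,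
    Multiset.nodup_iff_count_le_one, not_forall, not_le, Nat.lt_iff_add_one_le]

theorem Polynomial.exists_sq_dvd_prod_X_sub_C_iff {R ι : Type*} [CommRing R] [IsDomain R]
    [Fintype ι] (v : ι → R) :
    (∃ t, (X - C t) ^ 2 ∣ ∏ i, (X - C (v i))) ↔ ¬ Function.Injective v := by
  have h := exists_sq_dvd_prod_multiset_X_sub_C_iff (Finset.univ.val.map v)
  rw [Multiset.map_map, Multiset.nodup_map_iff_inj_on Finset.univ.nodup] at h
  simpa [Function.Injective] using h

theorem Matrix.IsHermitian.trace_mul_self {𝕜 n : Type*} [RCLike 𝕜] [Fintype n] [DecidableEq n]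
    {A : Matrix n n 𝕜} (hA : A.IsHermitian) : (A * A).trace = ∑ i, (hA.eigenvalues i : 𝕜) ^ 2 := by
  conv_lhs => rw [hA.spectral_theorem, ← map_mul, Unitary.conjStarAlgAut_apply, trace_mul_cycle,
    Unitary.coe_star_mul_self, one_mul, diagonal_mul_diagonal, trace_diagonal]
  simp [sq]

theorem sum_sq_pow_three_eq_of_sum_eq_zero (v : Fin 3 → ℝ) (hv : ∑ i, v i = 0) :
    (∑ i, v i ^ 2) ^ 3 = 54 * (∏ i, v i) ^ 2 + 2 * (vandermonde v).det ^ 2 := by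
  rw [Fin.sum_univ_three] at hv
  simp only [Fin.sum_univ_three, Fin.prod_univ_three, det_fin_three, vandermonde_apply,
    Fin.val_zero, Fin.val_one, Fin.val_two]
  rw [show v 2 = -(v 0 + v 1) by linarith]
  ring

theorem sq_inv_sqrt_mul_rpow_three_halves {c s : ℝ} (hc : 0 ≤ c) (hs : 0 ≤ s) :
    ((√c)⁻¹ * s ^ ((3 : ℝ) / 2)) ^ 2 = s ^ 3 / c := by
  rw [mul_pow, inv_pow, Real.sq_sqrt hc, ← Real.rpow_natCast, ← Real.rpow_mul hs]
  norm_num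
  ring

theorem abs_prod_le_of_sum_eq_zero (v : Fin 3 → ℝ) (hv : ∑ i, v i = 0) :
    |∏ i, v i| ≤ (√54)⁻¹ * (∑ i, v i ^ 2) ^ ((3 : ℝ) / 2) ∧
      (|∏ i, v i| = (√54)⁻¹ * (∑ i, v i ^ 2) ^ ((3 : ℝ) / 2) ↔ ¬ Function.Injective v) := by
  set r := (√54)⁻¹ * (∑ i, v i ^ 2) ^ ((3 : ℝ) / 2)
  have hr : 0 ≤ r := by positivity
  have hr_sq : r ^ 2 = (∏ i, v i) ^ 2 + 2 / 54 * (vandermonde v).det ^ 2 := by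
    rw [sq_inv_sqrt_mul_rpow_three_halves (by norm_num) (by positivity),
      sum_sq_pow_three_eq_of_sum_eq_zero v hv]
    ring
  rw [← det_vandermonde_ne_zero_iff, not_not, ← sq_le_sq₀ (abs_nonneg _) hr,
    ← pow_left_inj₀ (abs_nonneg _) hr two_ne_zero, sq_abs, hr_sq]
  exact ⟨le_add_of_nonneg_right (by positivity), by simp⟩

theorem stmt6 (X : Matrix (Fin 3) (Fin 3) ℝ) (hX : Xᵀ = X) (htr : X.trace = 0) :
    |X.det| ≤ (Real.sqrt 54)⁻¹ * ((X * X).trace) ^ ((3 : ℝ) / 2) ∧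
    (|X.det| = (Real.sqrt 54)⁻¹ * ((X * X).trace) ^ ((3 : ℝ) / 2) ↔
      ∃ t : ℝ, (Polynomial.X - C t) ^ 2 ∣ X.charpoly) := by
  have hH : X.IsHermitian := by rwa [IsHermitian, conjTranspose_eq_transpose_of_trivial]
  have hsum : ∑ i, hH.eigenvalues i = 0 := by simpa [hH.trace_eq_sum_eigenvalues] using htr
  simp only [hH.det_eq_prod_eigenvalues, hH.trace_mul_self, hH.charpoly_eq,
    RCLike.ofReal_real_eq_id, id, exists_sq_dvd_prod_X_sub_C_iff]
  exact abs_prod_le_of_sum_eq_zero _ hsum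
end

section
/- A 2-dimensional subspace W of the space of trace-free symmetric real 3×3 matrices satisfies SO(3)·W = 𝔭 (every trace-free symmetric matrix is SO(3)-conjugate to an element of W) if and only if W contains a nonzero matrix with two equal eigenvalues. -/
/-!
A trace-free symmetric `A : Matrix (Fin 3) (Fin 3) ℝ` is determined up to `SO(3)`-conjugacy by
`S = tr (A * A)` and `D = det A`, since its characteristic polynomial is `X³ - (S / 2) X - D`.
The discriminant `S³ / 2 - 27 D²` of this cubic is nonnegative, and vanishes exactly when `A` has
a repeated eigenvalue. Conjugating `diag (1, 1, -2)` into `W` gives one direction. Conversely, the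
scale-invariant quantity `D / S^(3/2)` is odd and continuous on the connected set `W \ {0}`; at an
element with a repeated eigenvalue it has the extremal absolute value `54^(-1/2)`, so it takes
every admissible value on `W`, and rescaling realises every admissible pair `(S, D)`.
-/

open Matrix Polynomial

namespace Cubic

variable {K : Type*} [Field K] {P : Cubic K}

theorem discr_mk_one_zero (c d : K) : (⟨1, 0, c, d⟩ : Cubic K).discr = -4 * c ^ 3 - 27 * d ^ 2 := by
  simp [discr]

theorem discr_nonneg_of_splits [LinearOrder K] [IsStrictOrderedRing K] (ha : P.a ≠ 0)
    (hP : P.toPoly.Splits) : 0 ≤ P.discr := by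
  obtain ⟨x, y, z, h3⟩ := (splits_iff_roots_eq_three (φ := RingHom.id K) ha).mp (by simpa)
  rw [← RingHom.id_apply P.discr, discr_eq_prod_three_roots ha h3]
  positivity

theorem discr_eq_zero_of_sq_dvd (ha : P.a ≠ 0) (hP : P.toPoly.Splits) {t : K}
    (ht : (X - C t) ^ 2 ∣ P.toPoly) : P.discr = 0 := by
  classical
  by_contra hd
  have hnodup := (discr_ne_zero_iff_roots_nodup (φ := RingHom.id K) ha (by simpa)).mp hd
  have hcount : 2 ≤ P.toPoly.roots.count t := by
    rwa [count_roots, le_rootMultiplicity_iff (ne_zero_of_a_ne_zero ha)]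
  rw [map_roots, Polynomial.map_id, Multiset.nodup_iff_count_le_one] at hnodup
  linarith [hnodup t]

end Cubic

namespace Matrix

variable {n : Type*} [Fintype n]

theorem IsHermitian.trace_mul_self_nonneg {M : Matrix n n ℝ} (hM : M.IsHermitian) :
    0 ≤ (M * M).trace := by
  simpa only [hM.eq] using (posSemidef_conjTranspose_mul_self M).trace_nonneg

theorem IsHermitian.trace_mul_self_pos {M : Matrix n n ℝ} (hM : M.IsHermitian) (h0 : M ≠ 0) :
    0 < (M * M).trace := by
  have := trace_conjTranspose_mul_self_eq_zero_iff.not.mpr h0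
  rw [hM.eq] at this
  exact hM.trace_mul_self_nonneg.lt_of_ne' this

variable [DecidableEq n]

theorem charpoly_mul_mul_transpose {R : Type*} [CommRing R] {k : Matrix n n R} (hk : kᵀ * k = 1)
    (w : Matrix n n R) : (k * w * kᵀ).charpoly = w.charpoly := by
  rw [charpoly_mul_comm, ← Matrix.mul_assoc, hk, Matrix.one_mul]

theorem exists_mul_transpose_eq_one_det_eq_conj_diagonal {R : Type*} [CommRing R] [Nonempty n]
    {s : R} (hs : s * s = 1) :
    ∃ E : Matrix n n R, E * Eᵀ = 1 ∧ E.det = s ∧ ∀ d : n → R, E * diagonal d * Eᵀ = diagonal d := by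
  let i₀ : n := Classical.arbitrary n
  let e : n → R := Function.update 1 i₀ s
  have hsign : ∀ i, e i * e i = 1 := by
    intro i
    rcases eq_or_ne i i₀ with rfl | hi
    · simpa [e] using hs
    · simp [e, hi]
  refine ⟨diagonal e, ?_, ?_, fun d => ?_⟩
  · rw [diagonal_transpose, diagonal_mul_diagonal, funext hsign, diagonal_one]
  · simp [e, det_diagonal, Finset.prod_update_of_mem (Finset.mem_univ _)]
  · rw [diagonal_transpose, diagonal_mul_diagonal, diagonal_mul_diagonal]
    congr 1
    funext i
    linear_combination d i * hsign i

theorem IsHermitian.eq_mul_diagonal_eigenvalues_mul_transpose {A : Matrix n n ℝ}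
    (hA : A.IsHermitian) :
    A = (hA.eigenvectorUnitary : Matrix n n ℝ) * diagonal hA.eigenvalues *
      (hA.eigenvectorUnitary : Matrix n n ℝ)ᵀ := by
  conv_lhs => rw [hA.spectral_theorem]
  simp [Unitary.conjStarAlgAut_apply, star_eq_conjTranspose]

theorem IsHermitian.eigenvectorUnitary_mul_transpose {A : Matrix n n ℝ} (hA : A.IsHermitian) :
    (hA.eigenvectorUnitary : Matrix n n ℝ) * (hA.eigenvectorUnitary : Matrix n n ℝ)ᵀ = 1 := by
  simpa [star_eq_conjTranspose] using (mem_unitaryGroup_iff.mp hA.eigenvectorUnitary.2)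

theorem IsHermitian.exists_specialOrthogonal_conj_of_charpoly_eq {A B : Matrix n n ℝ}
    (hA : A.IsHermitian) (hB : B.IsHermitian) (h : A.charpoly = B.charpoly) :
    ∃ k : Matrix n n ℝ, k * kᵀ = 1 ∧ k.det = 1 ∧ k * B * kᵀ = A := by
  rcases isEmpty_or_nonempty n with hn | hn
  · exact ⟨1, by simp, by simp, Subsingleton.elim _ _⟩
  set U : Matrix n n ℝ := ↑hA.eigenvectorUnitary
  set V : Matrix n n ℝ := ↑hB.eigenvectorUnitary
  have hU : U * Uᵀ = 1 := hA.eigenvectorUnitary_mul_transpose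
  have hV : Vᵀ * V = 1 := mul_eq_one_comm.mp hB.eigenvectorUnitary_mul_transpose
  have hAU : A = U * diagonal hB.eigenvalues * Uᵀ := by
    rw [← (hA.eigenvalues_eq_eigenvalues_iff hB).mpr h]
    exact hA.eq_mul_diagonal_eigenvalues_mul_transpose
  have hBV : B = V * diagonal hB.eigenvalues * Vᵀ := hB.eq_mul_diagonal_eigenvalues_mul_transpose
  have hVc : ∀ X, Vᵀ * (V * X) = X := fun X => by rw [← Matrix.mul_assoc, hV, Matrix.one_mul]
  have hUV : U * Vᵀ * (U * Vᵀ)ᵀ = 1 := by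
    simp only [transpose_mul, transpose_transpose, Matrix.mul_assoc, hVc, hU]
  have hdet : (U * Vᵀ).det * (U * Vᵀ).det = 1 := by
    simpa only [det_mul _ (U * Vᵀ)ᵀ, det_transpose, det_one] using congrArg det hUV
  obtain ⟨E, hE, hEdet, hEd⟩ := exists_mul_transpose_eq_one_det_eq_conj_diagonal (n := n) hdet
  refine ⟨U * E * Vᵀ, ?_, ?_, ?_⟩
  · simp only [transpose_mul, transpose_transpose, Matrix.mul_assoc, hVc]
    rw [← Matrix.mul_assoc E, hE, Matrix.one_mul, hU]
  · rw [det_mul] at hdet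
    rw [det_mul, det_mul, hEdet, det_mul]
    linear_combination hdet
  · rw [hBV, hAU]
    conv_rhs => rw [← hEd hB.eigenvalues]
    simp only [transpose_mul, transpose_transpose, Matrix.mul_assoc, hVc]

theorem charpoly_eq_toPoly_of_trace_eq_zero {K : Type*} [Field K] [NeZero (2 : K)]
    {A : Matrix (Fin 3) (Fin 3) K} (hA : A.trace = 0) :
    A.charpoly = (⟨1, 0, -((A * A).trace / 2), -A.det⟩ : Cubic K).toPoly := by
  have h22 : A 2 2 = -A 0 0 - A 1 1 := by
    rw [trace_fin_three] at hA; linear_combination hA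
  have htr : (A * A).trace / 2 = A 0 0 ^ 2 + A 0 0 * A 1 1 + A 1 1 ^ 2
      + A 0 1 * A 1 0 + A 0 2 * A 2 0 + A 1 2 * A 2 1 := by
    rw [div_eq_iff two_ne_zero]
    simp only [trace_fin_three, mul_apply, Fin.sum_univ_three, h22]
    ring
  rw [htr]
  simp only [Cubic.toPoly, charpoly, det_fin_three, charmatrix_apply, h22, diagonal_apply]
  simp only [Fin.reduceEq, if_true, if_false, map_add, map_mul, map_neg, map_sub, map_pow, map_one,
    map_zero]
  ring

theorem IsHermitian.det_sq_le_of_trace_eq_zero {A : Matrix (Fin 3) (Fin 3) ℝ} (hA : A.IsHermitian)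
    (h0 : A.trace = 0) : 54 * A.det ^ 2 ≤ (A * A).trace ^ 3 := by
  have hP := charpoly_eq_toPoly_of_trace_eq_zero h0
  have := Cubic.discr_nonneg_of_splits one_ne_zero (hP ▸ hA.splits_charpoly)
  rw [Cubic.discr_mk_one_zero] at this
  linarith

theorem IsHermitian.det_sq_eq_of_sq_dvd_charpoly {A : Matrix (Fin 3) (Fin 3) ℝ}
    (hA : A.IsHermitian) (h0 : A.trace = 0) {t : ℝ} (ht : (X - C t) ^ 2 ∣ A.charpoly) :
    54 * A.det ^ 2 = (A * A).trace ^ 3 := by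
  have hP := charpoly_eq_toPoly_of_trace_eq_zero h0
  have := Cubic.discr_eq_zero_of_sq_dvd one_ne_zero (hP ▸ hA.splits_charpoly) (hP ▸ ht)
  rw [Cubic.discr_mk_one_zero] at this
  linarith

noncomputable def normalizedDet (M : Matrix (Fin 3) (Fin 3) ℝ) : ℝ :=
  M.det / √((M * M).trace) ^ 3

theorem normalizedDet_neg (M : Matrix (Fin 3) (Fin 3) ℝ) :
    normalizedDet (-M) = -normalizedDet M := by
  rw [normalizedDet, normalizedDet, neg_mul_neg, det_neg, Fintype.card_fin]
  ring

theorem normalizedDet_sq {M : Matrix (Fin 3) (Fin 3) ℝ} (hM : 0 < (M * M).trace) :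
    normalizedDet M ^ 2 = M.det ^ 2 / (M * M).trace ^ 3 := by
  rw [normalizedDet, div_pow, ← pow_mul, pow_mul', Real.sq_sqrt hM.le]

theorem trace_mul_self_smul_sqrt_div {M : Matrix (Fin 3) (Fin 3) ℝ} (hM : 0 < (M * M).trace)
    {S : ℝ} (hS : 0 ≤ S) :
    ((√(S / (M * M).trace) • M) * (√(S / (M * M).trace) • M)).trace = S := by
  rw [smul_mul_smul_comm, trace_smul, smul_eq_mul, Real.mul_self_sqrt (div_nonneg hS hM.le),
    div_mul_cancel₀ _ hM.ne']

theorem det_smul_sqrt_div (M : Matrix (Fin 3) (Fin 3) ℝ) {S : ℝ} (hS : 0 ≤ S) :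
    (√(S / (M * M).trace) • M).det = √S ^ 3 * normalizedDet M := by
  rw [det_smul, Fintype.card_fin, normalizedDet, Real.sqrt_div hS, div_pow, mul_div_assoc']
  ring

theorem continuousOn_normalizedDet :
    ContinuousOn normalizedDet {M | 0 < (M * M).trace} := by
  have hcont : Continuous fun M : Matrix (Fin 3) (Fin 3) ℝ => (M * M).trace :=
    (continuous_id.matrix_mul continuous_id).matrix_trace
  refine continuous_id.matrix_det.continuousOn.div
    ((Real.continuous_sqrt.comp hcont).pow 3).continuousOn fun M hM => ?_
  exact pow_ne_zero _ (Real.sqrt_ne_zero'.mpr hM)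

theorem exists_mem_normalizedDet_eq {W : Submodule ℝ (Matrix (Fin 3) (Fin 3) ℝ)}
    (hrank : 1 < Module.rank ℝ W) (hW : ∀ M ∈ W, M.IsHermitian)
    {X₀ : Matrix (Fin 3) (Fin 3) ℝ} (hX₀W : X₀ ∈ W) (hX₀ : X₀ ≠ 0) {y : ℝ}
    (hy : |y| ≤ |normalizedDet X₀|) :
    ∃ M ∈ W, M ≠ 0 ∧ normalizedDet M = y := by
  set s : Set W := {0}ᶜ
  have hcont : ContinuousOn (fun M : W => normalizedDet M) s := by
    refine continuousOn_normalizedDet.comp continuous_subtype_val.continuousOn fun M hM => ?_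
    exact (hW M M.2).trace_mul_self_pos (by simpa [s] using hM)
  obtain ⟨a, ha, haX⟩ : ∃ a : W, a ∈ s ∧
      normalizedDet a = -|normalizedDet X₀| ∧ normalizedDet (-a : W) = |normalizedDet X₀| := by
    have hX₀s : (⟨X₀, hX₀W⟩ : W) ∈ s := by simpa [s] using hX₀
    rcases le_total (normalizedDet X₀) 0 with h | h
    · refine ⟨⟨X₀, hX₀W⟩, hX₀s, ?_, ?_⟩
      · simp [abs_of_nonpos h]
      · simp [normalizedDet_neg, abs_of_nonpos h]
    · refine ⟨-⟨X₀, hX₀W⟩, by simpa [s] using hX₀, ?_, ?_⟩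
      · simp [normalizedDet_neg, abs_of_nonneg h]
      · simp [abs_of_nonneg h]
  obtain ⟨M, hM, hMy⟩ :=
    (isConnected_compl_singleton_of_one_lt_rank hrank 0).isPreconnected.intermediate_value
      (b := -a) ha (by simpa [s] using ha) hcont
      (by rw [Set.mem_Icc, haX.1, haX.2]; exact abs_le.mp hy)
  exact ⟨M, M.2, by simpa [s] using hM, hMy⟩

theorem exists_mem_trace_mul_self_eq_and_det_eq {W : Submodule ℝ (Matrix (Fin 3) (Fin 3) ℝ)}
    (hrank : 1 < Module.rank ℝ W) (hW : ∀ M ∈ W, M.IsHermitian)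
    {X₀ : Matrix (Fin 3) (Fin 3) ℝ} (hX₀W : X₀ ∈ W) (hX₀ : X₀ ≠ 0)
    (hX₀eq : 54 * X₀.det ^ 2 = (X₀ * X₀).trace ^ 3) {S D : ℝ} (hS : 0 ≤ S)
    (hSD : 54 * D ^ 2 ≤ S ^ 3) :
    ∃ w ∈ W, (w * w).trace = S ∧ w.det = D := by
  have hX₀pos := (hW X₀ hX₀W).trace_mul_self_pos hX₀
  have hy : |D / √S ^ 3| ≤ |normalizedDet X₀| := by
    rw [← sq_le_sq, normalizedDet_sq hX₀pos, div_pow, ← pow_mul, pow_mul', Real.sq_sqrt hS,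
      show X₀.det ^ 2 / (X₀ * X₀).trace ^ 3 = 1 / 54 by field_simp; linarith]
    exact div_le_of_le_mul₀ (by positivity) (by norm_num) (by linarith)
  obtain ⟨M, hMW, hM0, hMy⟩ := exists_mem_normalizedDet_eq hrank hW hX₀W hX₀ hy
  refine ⟨√(S / (M * M).trace) • M, W.smul_mem _ hMW,
    trace_mul_self_smul_sqrt_div ((hW M hMW).trace_mul_self_pos hM0) hS, ?_⟩
  rw [det_smul_sqrt_div M hS, hMy]
  rcases hS.eq_or_lt with rfl | hSpos
  · rw [Real.sqrt_zero, zero_pow three_ne_zero, zero_mul]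
    nlinarith
  · have : √S ≠ 0 := (Real.sqrt_pos.mpr hSpos).ne'
    field_simp

end Matrix

theorem stmt7 (W : Submodule ℝ (Matrix (Fin 3) (Fin 3) ℝ))
    (hW : ∀ X ∈ W, Xᵀ = X ∧ X.trace = 0)
    (hdim : Module.finrank ℝ W = 2) :
    (∀ A : Matrix (Fin 3) (Fin 3) ℝ, Aᵀ = A → A.trace = 0 →
      ∃ (k : Matrix (Fin 3) (Fin 3) ℝ) (w : Matrix (Fin 3) (Fin 3) ℝ),
        w ∈ W ∧ k * kᵀ = 1 ∧ k.det = 1 ∧ k * w * kᵀ = A) ↔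
    (∃ X ∈ W, X ≠ 0 ∧ ∃ t : ℝ, (Polynomial.X - C t) ^ 2 ∣ X.charpoly) := by
  have hherm : ∀ M ∈ W, M.IsHermitian := fun M hM => isHermitian_iff_isSymm.mpr (hW M hM).1
  constructor
  · intro hsurj
    obtain ⟨k, w, hwW, hk, -, hkw⟩ := hsurj (diagonal ![1, 1, -2]) (diagonal_transpose _)
      (by simp [Fin.sum_univ_three, cons_val_two]; norm_num)
    refine ⟨w, hwW, ?_, 1, ?_⟩
    · rintro rfl
      simpa using congrFun (congrFun hkw 0) 0
    · rw [← charpoly_mul_mul_transpose (mul_eq_one_comm.mp hk), hkw, charpoly_diagonal,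
        Fin.prod_univ_three]
      exact ⟨X - C (-2), by simp [sq]⟩
  · rintro ⟨X₀, hX₀W, hX₀, t, ht⟩ A hAs hA0
    have hA : A.IsHermitian := isHermitian_iff_isSymm.mpr hAs
    obtain ⟨w, hwW, hS, hD⟩ := exists_mem_trace_mul_self_eq_and_det_eq
      (Module.one_lt_rank_of_one_lt_finrank (by omega)) hherm hX₀W hX₀
      ((hherm X₀ hX₀W).det_sq_eq_of_sq_dvd_charpoly (hW X₀ hX₀W).2 ht)
      hA.trace_mul_self_nonneg (hA.det_sq_le_of_trace_eq_zero hA0)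
    obtain ⟨k, hk, hdet, hkw⟩ := hA.exists_specialOrthogonal_conj_of_charpoly_eq (hherm w hwW)
      (by rw [charpoly_eq_toPoly_of_trace_eq_zero hA0,
        charpoly_eq_toPoly_of_trace_eq_zero (hW w hwW).2, hS, hD])
    exact ⟨k, w, hwW, hk, hdet, hkw⟩
end

section
/- Every trace-free real quadratic form in three variables x, y, z can be written, after an orthonormal change of coordinates, in the form A(x² − y²) + Bxz for some A, B ∈ ℝ. -/
/-!
Diagonalise `M` by an orthogonal matrix, with eigenvalues `l₀ ≤ l₁ ≤ l₂`. Since they sum to `0`,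
`l₀ ≤ 0 ≤ l₂`, so the plane form `l₀ x² + l₂ z²` has a unit isotropic vector. A reflection of the
`xz`-plane taking it to the `z`-axis kills the `z²` term and leaves `l₁ y² = -(l₀ + l₂) y²`, which
is minus the new `x²` coefficient. Flipping the sign of `y` fixes the determinant without changing
the form.
-/

open Matrix

lemma dotProduct_mulVec_transpose_mul_mul {R n : Type*} [CommSemiring R] [Fintype n]
    (k N : Matrix n n R) (v : n → R) :
    v ⬝ᵥ ((kᵀ * N * k) *ᵥ v) = (k *ᵥ v) ⬝ᵥ (N *ᵥ (k *ᵥ v)) := by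
  rw [← mulVec_mulVec, ← mulVec_mulVec, dotProduct_mulVec, vecMul_transpose]

lemma exists_orthogonal_eq_mul_diagonal_mul_transpose {n : ℕ} {M : Matrix (Fin n) (Fin n) ℝ}
    (hM : Mᵀ = M) :
    ∃ (U : Matrix (Fin n) (Fin n) ℝ) (e : Fin n → ℝ),
      U * Uᵀ = 1 ∧ Monotone e ∧ M = U * diagonal e * Uᵀ := by
  have hMh : M.IsHermitian := by rwa [IsHermitian, conjTranspose_eq_transpose_of_trivial]
  set V : Matrix (Fin n) (Fin n) ℝ := (hMh.eigenvectorUnitary : Matrix (Fin n) (Fin n) ℝ)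
  have hstar : star V = Vᵀ := conjTranspose_eq_transpose_of_trivial V
  have hV : V * Vᵀ = 1 := by
    rw [← hstar]; exact mem_unitaryGroup_iff.mp hMh.eigenvectorUnitary.2
  have hspec : M = V * diagonal hMh.eigenvalues * Vᵀ := by
    simpa [V, Unitary.conjStarAlgAut_apply, hstar] using hMh.spectral_theorem
  set σ := Tuple.sort hMh.eigenvalues
  refine ⟨V.submatrix id σ, hMh.eigenvalues ∘ σ, ?_, Tuple.monotone_sort _, ?_⟩
  · rw [transpose_submatrix, submatrix_mul_equiv _ _ _ σ, submatrix_id_id, hV]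
  · rw [← submatrix_diagonal_equiv, transpose_submatrix, submatrix_mul_equiv _ _ _ σ,
      submatrix_mul_equiv _ _ _ σ, submatrix_id_id, ← hspec]

noncomputable def traceFreeNormalForm (A B : ℝ) : Matrix (Fin 3) (Fin 3) ℝ :=
  !![A, 0, B / 2; 0, -A, 0; B / 2, 0, 0]

lemma dotProduct_traceFreeNormalForm_mulVec (A B : ℝ) (w : Fin 3 → ℝ) :
    w ⬝ᵥ (traceFreeNormalForm A B *ᵥ w) = A * (w 0 ^ 2 - w 1 ^ 2) + B * (w 0 * w 2) := by
  simp only [traceFreeNormalForm, dotProduct, mulVec, of_apply, cons_val', cons_val_fin_one,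
    Fin.sum_univ_three, cons_val_zero, cons_val_one, cons_val]
  ring

lemma exists_unit_isotropic_vector {a b : ℝ} (ha : a ≤ 0) (hb : 0 ≤ b) :
    ∃ c s : ℝ, c ^ 2 + s ^ 2 = 1 ∧ a * s ^ 2 + b * c ^ 2 = 0 := by
  rcases (sub_nonneg.mpr (ha.trans hb)).eq_or_lt with hab | hab
  · exact ⟨1, 0, by norm_num, by nlinarith⟩
  · refine ⟨√(-a / (b - a)), √(b / (b - a)), ?_, ?_⟩ <;>
      simp only [Real.sq_sqrt (div_nonneg (neg_nonneg.mpr ha) hab.le),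
        Real.sq_sqrt (div_nonneg hb hab.le)] <;>
      field_simp <;> ring

def xzReflection (c s : ℝ) : Matrix (Fin 3) (Fin 3) ℝ := !![c, 0, s; 0, 1, 0; s, 0, -c]

lemma xzReflection_mul_transpose {c s : ℝ} (h : c ^ 2 + s ^ 2 = 1) :
    xzReflection c s * (xzReflection c s)ᵀ = 1 := by
  ext i j
  fin_cases i <;> fin_cases j <;> simp [xzReflection, mul_apply, Fin.sum_univ_three] <;> grind

lemma xzReflection_mul_diagonal_mul_transpose {c s : ℝ} (hcs : c ^ 2 + s ^ 2 = 1)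
    {l : Fin 3 → ℝ} (hsum : ∑ i, l i = 0) (hiso : l 0 * s ^ 2 + l 2 * c ^ 2 = 0) :
    xzReflection c s * diagonal l * (xzReflection c s)ᵀ
      = traceFreeNormalForm (l 0 + l 2) (2 * c * s * (l 0 - l 2)) := by
  rw [Fin.sum_univ_three] at hsum
  ext i j
  fin_cases i <;> fin_cases j <;>
    simp [xzReflection, traceFreeNormalForm, mul_apply, Fin.sum_univ_three, vecMul_diagonal] <;>
    grind

lemma exists_orthogonal_mul_mul_transpose_eq_traceFreeNormalForm {M : Matrix (Fin 3) (Fin 3) ℝ}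
    (hM : Mᵀ = M) (htr : M.trace = 0) :
    ∃ (k : Matrix (Fin 3) (Fin 3) ℝ) (A B : ℝ),
      k * kᵀ = 1 ∧ k * M * kᵀ = traceFreeNormalForm A B := by
  obtain ⟨U, l, hU, hmono, rfl⟩ := exists_orthogonal_eq_mul_diagonal_mul_transpose hM
  have hU' : Uᵀ * U = 1 := mul_eq_one_comm.mp hU
  have hsum : ∑ i, l i = 0 := by
    rwa [trace_mul_cycle, hU', Matrix.one_mul, trace_diagonal] at htr
  have h01 : l 0 ≤ l 1 := hmono (by decide)
  have h12 : l 1 ≤ l 2 := hmono (by decide)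
  have hsum3 : l 0 + l 1 + l 2 = 0 := Fin.sum_univ_three l ▸ hsum
  obtain ⟨c, s, hcs, hiso⟩ :=
    exists_unit_isotropic_vector (a := l 0) (b := l 2) (by linarith) (by linarith)
  set R := xzReflection c s
  refine ⟨R * Uᵀ, l 0 + l 2, 2 * c * s * (l 0 - l 2), ?_, ?_⟩
  · rw [transpose_mul, transpose_transpose, Matrix.mul_assoc, ← Matrix.mul_assoc Uᵀ, hU',
      Matrix.one_mul, xzReflection_mul_transpose hcs]
  · simp only [transpose_mul, transpose_transpose, Matrix.mul_assoc]
    simp only [← Matrix.mul_assoc Uᵀ, hU', Matrix.one_mul]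
    simpa only [Matrix.mul_assoc] using xzReflection_mul_diagonal_mul_transpose hcs hsum hiso

lemma diagonal_sign_mul_traceFreeNormalForm_mul_transpose (A B : ℝ) :
    diagonal ![1, -1, 1] * traceFreeNormalForm A B * (diagonal ![1, -1, 1])ᵀ
      = traceFreeNormalForm A B := by
  ext i j
  fin_cases i <;> fin_cases j <;> simp [traceFreeNormalForm]

lemma exists_special_orthogonal_mul_mul_transpose_eq_traceFreeNormalForm
    {M : Matrix (Fin 3) (Fin 3) ℝ} (hM : Mᵀ = M) (htr : M.trace = 0) :
    ∃ (k : Matrix (Fin 3) (Fin 3) ℝ) (A B : ℝ),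
      k * kᵀ = 1 ∧ k.det = 1 ∧ k * M * kᵀ = traceFreeNormalForm A B := by
  obtain ⟨k, A, B, hk, hkM⟩ := exists_orthogonal_mul_mul_transpose_eq_traceFreeNormalForm hM htr
  have hdet_sq : k.det * k.det = 1 := by
    simpa only [det_mul, det_transpose, det_one] using congrArg det hk
  rcases mul_self_eq_one_iff.mp hdet_sq with hdet | hdet
  · exact ⟨k, A, B, hk, hdet, hkM⟩
  set S : Matrix (Fin 3) (Fin 3) ℝ := diagonal ![1, -1, 1]
  refine ⟨S * k, A, B, ?_, ?_, ?_⟩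
  · rw [transpose_mul, Matrix.mul_assoc, ← Matrix.mul_assoc k, hk, Matrix.one_mul]
    ext i j
    fin_cases i <;> fin_cases j <;> simp [S]
  · simp [S, hdet, Fin.prod_univ_three]
  · calc S * k * M * (S * k)ᵀ = S * (k * M * kᵀ) * Sᵀ := by
          simp only [transpose_mul, Matrix.mul_assoc]
      _ = traceFreeNormalForm A B := by
          rw [hkM, diagonal_sign_mul_traceFreeNormalForm_mul_transpose]

theorem stmt9 (M : Matrix (Fin 3) (Fin 3) ℝ) (hM : Mᵀ = M) (htr : M.trace = 0) :
    ∃ (k : Matrix (Fin 3) (Fin 3) ℝ) (A B : ℝ),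
      k * kᵀ = 1 ∧ k.det = 1 ∧
      ∀ v : Fin 3 → ℝ,
        v ⬝ᵥ (M *ᵥ v)
          = A * ((k *ᵥ v) 0 ^ 2 - (k *ᵥ v) 1 ^ 2) + B * ((k *ᵥ v) 0 * (k *ᵥ v) 2) := by
  obtain ⟨k, A, B, hk, hdet, hkM⟩ :=
    exists_special_orthogonal_mul_mul_transpose_eq_traceFreeNormalForm hM htr
  have hM' : M = kᵀ * traceFreeNormalForm A B * k := by
    rw [← hkM, ← Matrix.mul_assoc, ← Matrix.mul_assoc, mul_eq_one_comm.mp hk, Matrix.one_mul,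
      Matrix.mul_assoc, mul_eq_one_comm.mp hk, Matrix.mul_one]
  refine ⟨k, A, B, hk, hdet, fun v => ?_⟩
  rw [hM', dotProduct_mulVec_transpose_mul_mul, dotProduct_traceFreeNormalForm_mulVec]
end

section
/- Let X be a symmetric real 3×3 matrix of the form with rows (λ,0,δ), (0,μ,ε), (δ,ε,−λ−μ). If X is SO(3)-conjugate to X₀ = diag(1,1,−2), then δ = 0 or ε = 0. -/
open Matrix

theorem stmt11 (l μ δ ε : ℝ)
    (h : ∃ k : Matrix (Fin 3) (Fin 3) ℝ, k * kᵀ = 1 ∧ k.det = 1 ∧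
      k * !![(1 : ℝ), 0, 0; 0, 1, 0; 0, 0, -2] * kᵀ
        = !![l, 0, δ; 0, μ, ε; δ, ε, -(l + μ)]) :
    δ = 0 ∨ ε = 0 := by
  obtain ⟨k, hk, -, hX⟩ := h
  set X0 : Matrix (Fin 3) (Fin 3) ℝ := !![(1 : ℝ), 0, 0; 0, 1, 0; 0, 0, -2] with hX0
  set X : Matrix (Fin 3) (Fin 3) ℝ := !![l, 0, δ; 0, μ, ε; δ, ε, -(l + μ)] with hXdef
  have hk' : kᵀ * k = 1 := mul_eq_one_comm.mp hk
  have hC : X0 * X0 + X0 = (2 : ℝ) • (1 : Matrix (Fin 3) (Fin 3) ℝ) := by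
    rw [hX0]
    simp [Matrix.mul_fin_three, Matrix.one_fin_three, Matrix.smul_of, Matrix.smul_cons]
    norm_num
  have hE : X * X + X = (2 : ℝ) • (1 : Matrix (Fin 3) (Fin 3) ℝ) := by
    have : X * X + X = k * (X0 * X0 + X0) * kᵀ := by
      rw [← hX]
      calc k * X0 * kᵀ * (k * X0 * kᵀ) + k * X0 * kᵀ
          = k * X0 * (kᵀ * k) * X0 * kᵀ + k * X0 * kᵀ := by
            simp only [Matrix.mul_assoc]
        _ = k * (X0 * X0 + X0) * kᵀ := by
            rw [hk']
            simp only [Matrix.mul_one, Matrix.mul_add, Matrix.add_mul, Matrix.mul_assoc]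
    rw [this, hC]
    rw [Matrix.mul_smul, Matrix.smul_mul, Matrix.mul_one, hk]
  have h01 : (X * X + X) 0 1 = δ * ε := by
    simp [hXdef, Matrix.mul_apply, Fin.sum_univ_three]
  rw [hE] at h01
  have : δ * ε = 0 := by
    simpa [Matrix.one_apply] using h01.symm
  exact mul_eq_zero.mp this
end

section
/- Suppose λ, μ, δ, ε ∈ ℝ satisfy 2(λ² + μ² + λμ + δ² + ε²) = 6 and −λμ(λ+μ) − ε²λ − δ²μ = −2. Then ε²(λ−μ) = (μ+2)(μ−1)² and δ²(μ−λ) = (λ+2)(λ−1)², and consequently δ = 0 or ε = 0. -/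
theorem stmt12 (l μ δ ε : ℝ)
    (h1 : 2 * (l ^ 2 + μ ^ 2 + l * μ + δ ^ 2 + ε ^ 2) = 6)
    (h2 : -(l * μ * (l + μ)) - ε ^ 2 * l - δ ^ 2 * μ = -2) :
    ε ^ 2 * (l - μ) = (μ + 2) * (μ - 1) ^ 2 ∧
    δ ^ 2 * (μ - l) = (l + 2) * (l - 1) ^ 2 ∧
    (δ = 0 ∨ ε = 0) := by
  have e1 : ε ^ 2 * (l - μ) = (μ + 2) * (μ - 1) ^ 2 := by
    linear_combination (-μ/2) * h1 - h2
  have e2 : δ ^ 2 * (μ - l) = (l + 2) * (l - 1) ^ 2 := by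
    linear_combination (-l/2) * h1 - h2
  refine ⟨e1, e2, ?_⟩
  by_contra h
  push_neg at h
  obtain ⟨hδ, hε⟩ := h
  have hd : δ ^ 2 > 0 := by positivity
  have he : ε ^ 2 > 0 := by positivity
  -- bounds |l| ≤ 2, |μ| ≤ 2
  have hμ2 : μ + 2 ≥ 0 := by nlinarith [sq_nonneg (l + μ/2), sq_nonneg (μ + 2)]
  have hl2 : l + 2 ≥ 0 := by nlinarith [sq_nonneg (μ + l/2), sq_nonneg (l + 2)]
  have hge1 : ε ^ 2 * (l - μ) ≥ 0 := by rw [e1]; positivity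
  have hge2 : δ ^ 2 * (μ - l) ≥ 0 := by rw [e2]; positivity
  have hlm : l = μ := by nlinarith
  subst hlm
  have z1 : (l + 2) * (l - 1) ^ 2 = 0 := by linarith [e1]
  rcases mul_eq_zero.mp z1 with hc | hc
  · nlinarith
  · have : l = 1 := by nlinarith [sq_nonneg (l - 1)]
    subst this
    nlinarith
end

section
/- Let X₀ = diag(1,1,−2), Y = Y_{α,δ,ε} = !![α,0,δ; 0,−α,ε; δ,ε,0] with (α,δ,ε) ≠ (0,0,0), and W = span{X₀, Y}. Then there exists c ∈ ℝ such that for Z = Y + cX₀, the space [𝔰𝔬(3), Z] + W equals all of 𝔭, i.e. W is generic. -/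
open Matrix

/-!
Write `U = skew u v w`. For a symmetric trace-free `P`, the equation
`[U, Y + c • X₀] + a • X₀ + b • Y = P` is a square linear system in `(u, v, w, a, b)` for the five
independent entries of `P`. Its determinant is a polynomial in `c` of degree at most two, with
leading coefficient `36 α²` and, when `α = 0`, constant term `2 (δ² + ε²)²`. So it does not vanish
identically, and for a suitable `c` the system is solvable for every `P`. Conversely, the commutator
of a skew-symmetric and a symmetric matrix is symmetric and trace-free.
-/

namespace Matrix

variable (n R : Type*) [Fintype n] [CommRing R]

def traceFreeSymm : Submodule R (Matrix n n R) where
  carrier := {P | Pᵀ = P ∧ P.trace = 0}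
  add_mem' := by
    rintro P Q ⟨hP, htrP⟩ ⟨hQ, htrQ⟩
    exact ⟨by rw [transpose_add, hP, hQ], by rw [trace_add, htrP, htrQ, add_zero]⟩
  zero_mem' := ⟨transpose_zero, trace_zero n R⟩
  smul_mem' := by
    rintro r P ⟨hP, htrP⟩
    exact ⟨by rw [transpose_smul, hP], by rw [trace_smul, htrP, smul_zero]⟩

variable {n R}

lemma commutator_mem_traceFreeSymm {U Z : Matrix n n R} (hU : Uᵀ = -U) (hZ : Zᵀ = Z) :
    U * Z - Z * U ∈ traceFreeSymm n R := by
  refine ⟨?_, by rw [trace_sub, trace_mul_comm, sub_self]⟩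
  simp only [transpose_sub, transpose_mul, hU, hZ, mul_neg, neg_mul, sub_neg_eq_add]
  abel

end Matrix

lemma exists_quadratic_ne_zero {K : Type*} [Field K] [NeZero (2 : K)] {a b c : K}
    (h : a ≠ 0 ∨ c ≠ 0) : ∃ x : K, a * x ^ 2 + b * x + c ≠ 0 := by
  by_contra! hzero
  have hc : c = 0 := by simpa using hzero 0
  have ha : a = 0 := by
    have h2a : 2 * a = 0 := by linear_combination hzero 1 + hzero (-1) - 2 * hc
    simpa [two_ne_zero] using h2a
  exact h.elim (· ha) (· hc)

namespace GenericPlane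

def X₀ : Matrix (Fin 3) (Fin 3) ℝ := !![1, 0, 0; 0, 1, 0; 0, 0, -2]

def Y (α δ ε : ℝ) : Matrix (Fin 3) (Fin 3) ℝ := !![α, 0, δ; 0, -α, ε; δ, ε, 0]

def skew (u v w : ℝ) : Matrix (Fin 3) (Fin 3) ℝ := !![0, u, v; -u, 0, w; -v, -w, 0]

lemma X₀_mem_traceFreeSymm : X₀ ∈ traceFreeSymm (Fin 3) ℝ := by
  refine ⟨?_, by rw [X₀, trace_fin_three_of]; norm_num⟩
  ext i j; fin_cases i <;> fin_cases j <;> rfl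

lemma Y_mem_traceFreeSymm (α δ ε : ℝ) : Y α δ ε ∈ traceFreeSymm (Fin 3) ℝ := by
  refine ⟨?_, by rw [Y, trace_fin_three_of]; ring⟩
  ext i j; fin_cases i <;> fin_cases j <;> rfl

lemma transpose_skew (u v w : ℝ) : (skew u v w)ᵀ = -skew u v w := by
  ext i j; fin_cases i <;> fin_cases j <;> simp [skew]

/-- Row `k` holds the coefficients, in the unknowns `(u, v, w, a, b)`, of the `k`-th of the
entries `(0,0), (1,1), (0,1), (0,2), (1,2)` of `[skew u v w, Y α δ ε + c • X₀] + a • X₀ + b • Y α δ ε`;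
these five entries determine a symmetric trace-free matrix. -/
def coeffMatrix (α δ ε c : ℝ) : Matrix (Fin 5) (Fin 5) ℝ :=
  !![0, 2*δ, 0, 1, α;
     0, 0, 2*ε, 1, -α;
     -2*α, ε, δ, 0, 0;
     ε, -(α + 3*c), 0, 0, δ;
     -δ, 0, α - 3*c, 0, ε]

lemma det_coeffMatrix (α δ ε c : ℝ) :
    (coeffMatrix α δ ε c).det = 36 * α ^ 2 * c ^ 2 + 18 * α * (δ ^ 2 - ε ^ 2) * c
      + (2 * (δ ^ 2 + ε ^ 2) ^ 2 - 2 * α ^ 2 * (δ ^ 2 + ε ^ 2) - 4 * α ^ 4) := by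
  simp [coeffMatrix, det_succ_row_zero, Fin.sum_univ_succ, Fin.succAbove]
  ring

lemma exists_det_coeffMatrix_ne_zero {α δ ε : ℝ} (hne : (α, δ, ε) ≠ (0, 0, 0)) :
    ∃ c, (coeffMatrix α δ ε c).det ≠ 0 := by
  simp only [det_coeffMatrix]
  apply exists_quadratic_ne_zero
  by_cases hα : α = 0
  · subst hα
    right
    have hδε : δ ≠ 0 ∨ ε ≠ 0 := by
      by_contra! h
      exact hne (by simp [h])
    have : 0 < δ ^ 2 + ε ^ 2 := by
      rcases hδε with h | h <;> positivity
    norm_num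
    positivity
  · left
    positivity

lemma commutator_add_eq_of_mulVec_eq {α δ ε c : ℝ} {P : Matrix (Fin 3) (Fin 3) ℝ}
    (hP : Pᵀ = P) (htr : P.trace = 0) {x : Fin 5 → ℝ}
    (hx : coeffMatrix α δ ε c *ᵥ x = ![P 0 0, P 1 1, P 0 1, P 0 2, P 1 2]) :
    skew (x 0) (x 1) (x 2) * (Y α δ ε + c • X₀) - (Y α δ ε + c • X₀) * skew (x 0) (x 1) (x 2)
      + x 3 • X₀ + x 4 • Y α δ ε = P := by
  have e0 := congrFun hx 0
  have e1 := congrFun hx 1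
  have e2 := congrFun hx 2
  have e3 := congrFun hx 3
  have e4 := congrFun hx 4
  simp only [mulVec, dotProduct, coeffMatrix, Fin.sum_univ_five, of_apply, cons_val', cons_val,
    cons_val_zero, cons_val_one, cons_val_fin_one, zero_mul, one_mul, zero_add, add_zero]
    at e0 e1 e2 e3 e4
  have hsym : ∀ i j, P j i = P i j := fun i j => congrFun (congrFun hP i) j
  rw [trace_fin_three] at htr
  ext i j
  fin_cases i <;> fin_cases j <;>
    simp [skew, X₀, Y, hsym 0 1, hsym 0 2, hsym 1 2] <;>
    first
      | linear_combination e0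
      | linear_combination e1
      | linear_combination e2
      | linear_combination e3
      | linear_combination e4
      | linear_combination -e0 - e1 - htr

lemma exists_commutator_add_eq {α δ ε c : ℝ} (hdet : (coeffMatrix α δ ε c).det ≠ 0)
    {P : Matrix (Fin 3) (Fin 3) ℝ} (hP : Pᵀ = P) (htr : P.trace = 0) :
    ∃ (U : Matrix (Fin 3) (Fin 3) ℝ) (a b : ℝ), Uᵀ = -U ∧
      P = U * (Y α δ ε + c • X₀) - (Y α δ ε + c • X₀) * U + a • X₀ + b • Y α δ ε := by
  obtain ⟨x, hx⟩ := mulVec_surjective_iff_isUnit.mpr ((isUnit_iff_isUnit_det _).mpr hdet.isUnit)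
    ![P 0 0, P 1 1, P 0 1, P 0 2, P 1 2]
  exact ⟨skew (x 0) (x 1) (x 2), x 3, x 4, transpose_skew _ _ _,
    (commutator_add_eq_of_mulVec_eq hP htr hx).symm⟩

end GenericPlane

open GenericPlane in
theorem stmt16 (α δ ε : ℝ) (hne : (α, δ, ε) ≠ (0, 0, 0)) :
    ∃ c : ℝ,
      {P : Matrix (Fin 3) (Fin 3) ℝ |
        ∃ (U : Matrix (Fin 3) (Fin 3) ℝ) (a b : ℝ), Uᵀ = -U ∧
          P = (U * (!![α, 0, δ; 0, -α, ε; δ, ε, 0]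
                  + c • !![(1 : ℝ), 0, 0; 0, 1, 0; 0, 0, -2])
              - (!![α, 0, δ; 0, -α, ε; δ, ε, 0]
                  + c • !![(1 : ℝ), 0, 0; 0, 1, 0; 0, 0, -2]) * U)
            + a • !![(1 : ℝ), 0, 0; 0, 1, 0; 0, 0, -2]
            + b • !![α, 0, δ; 0, -α, ε; δ, ε, 0]}
      = {P : Matrix (Fin 3) (Fin 3) ℝ | Pᵀ = P ∧ P.trace = 0} := by
  obtain ⟨c, hdet⟩ := exists_det_coeffMatrix_ne_zero hne
  have hZ : Y α δ ε + c • X₀ ∈ traceFreeSymm (Fin 3) ℝ :=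
    add_mem (Y_mem_traceFreeSymm α δ ε) (Submodule.smul_mem _ c X₀_mem_traceFreeSymm)
  refine ⟨c, Set.ext fun P => ⟨?_, fun ⟨hP, htr⟩ => exists_commutator_add_eq hdet hP htr⟩⟩
  rintro ⟨U, a, b, hU, rfl⟩
  exact add_mem (add_mem (commutator_mem_traceFreeSymm hU hZ.1)
    (Submodule.smul_mem _ a X₀_mem_traceFreeSymm))
    (Submodule.smul_mem _ b (Y_mem_traceFreeSymm α δ ε))
end

section
/- Let X = diag(λ, μ, −λ−μ) with λ, μ, −λ−μ pairwise distinct, and Y = !![α,γ,δ; γ,β,ε; δ,ε,−α−β]. Then the span of X and Y is a generic 2-dimensional subspace of 𝔭 (i.e. [𝔰𝔬(3),X] + span{X,Y} = 𝔭) if and only if αμ − βλ ≠ 0. -/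
/-!
For `d` with distinct entries, `(U * diagonal d - diagonal d * U) i j = U i j * (d j - d i)`, so
`[𝔰𝔬(n), diagonal d]` is exactly the space of symmetric matrices with zero diagonal. Hence the
set is `𝔭` as soon as `(l, μ)` and `(α, β)`, the diagonals of `X` and `Y` up to the entry fixed by
the trace, are linearly independent. If they are not, `μ * P 0 0 - l * P 1 1` vanishes on the
whole set, but equals `μ ^ 2 + l ^ 2 ≠ 0` at `diagonal ![μ, -l, l - μ] ∈ 𝔭`.
-/

open Matrix

section Commutator

variable {n K : Type*} [Fintype n]

lemma trace_commutator [CommRing K] (A B : Matrix n n K) : (A * B - B * A).trace = 0 := by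
  rw [trace_sub, trace_mul_comm, sub_self]

variable [DecidableEq n]

lemma commutator_diagonal_apply [CommRing K] (U : Matrix n n K) (d : n → K) (i j : n) :
    (U * diagonal d - diagonal d * U) i j = U i j * (d j - d i) := by
  simp only [Matrix.sub_apply, mul_diagonal, diagonal_mul]
  ring

lemma transpose_commutator_diagonal [CommRing K] {U : Matrix n n K} (hU : Uᵀ = -U) (d : n → K) :
    (U * diagonal d - diagonal d * U)ᵀ = U * diagonal d - diagonal d * U := by
  ext i j
  have hji : U j i = -U i j := congr_fun₂ hU i j
  rw [transpose_apply, commutator_diagonal_apply, commutator_diagonal_apply, hji]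
  ring

lemma exists_skew_commutator_diagonal_eq [Field K] {d : n → K} (hd : Function.Injective d)
    {P : Matrix n n K} (hP : Pᵀ = P) (hdiag : ∀ i, P i i = 0) :
    ∃ U : Matrix n n K, Uᵀ = -U ∧ U * diagonal d - diagonal d * U = P := by
  refine ⟨of fun i j => P i j / (d j - d i), ?_, ?_⟩
  · ext i j
    have hji : P j i = P i j := congr_fun₂ hP i j
    rw [transpose_apply, Matrix.neg_apply, of_apply, of_apply, hji, ← div_neg, neg_sub]
  · ext i j
    rw [commutator_diagonal_apply, of_apply]
    rcases eq_or_ne i j with rfl | hij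
    · simp [hdiag]
    · exact div_mul_cancel₀ _ (sub_ne_zero.mpr (hd.ne hij).symm)

end Commutator

lemma exists_eq_mul_add_mul_of_det_ne_zero {K : Type*} [Field K] {l μ α β : K}
    (hdet : α * μ - β * l ≠ 0) (p q : K) :
    ∃ a b : K, p = a * l + b * α ∧ q = a * μ + b * β :=
  ⟨(α * q - β * p) / (α * μ - β * l), (μ * p - l * q) / (α * μ - β * l),
    by field_simp; ring, by field_simp; ring⟩

lemma transpose_symm_fin_three {R : Type*} (a b c d e f : R) :
    !![a, b, c; b, d, e; c, e, f]ᵀ = !![a, b, c; b, d, e; c, e, f] := by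
  ext i j; fin_cases i <;> fin_cases j <;> rfl

section FinThree

variable {l μ α β γ δ ε : ℝ}

lemma mul_diag_sub_mul_diag_of_eq_commutator_add {P U : Matrix (Fin 3) (Fin 3) ℝ} {a b : ℝ}
    (hP : P = U * diagonal ![l, μ, -l - μ] - diagonal ![l, μ, -l - μ] * U
      + a • diagonal ![l, μ, -l - μ] + b • !![α, γ, δ; γ, β, ε; δ, ε, -α - β]) :
    μ * P 0 0 - l * P 1 1 = b * (α * μ - β * l) := by
  simp only [hP, Matrix.add_apply, Matrix.smul_apply, commutator_diagonal_apply, diagonal_apply_eq,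
    of_apply, cons_val_zero, cons_val_one, smul_eq_mul, sub_self, mul_zero, zero_add]
  ring

lemma exists_eq_commutator_add_of_det_ne_zero (hd : Function.Injective ![l, μ, -l - μ])
    (hdet : α * μ - β * l ≠ 0) {P : Matrix (Fin 3) (Fin 3) ℝ} (hPT : Pᵀ = P)
    (hPtr : P.trace = 0) :
    ∃ (U : Matrix (Fin 3) (Fin 3) ℝ) (a b : ℝ), Uᵀ = -U ∧
      P = U * diagonal ![l, μ, -l - μ] - diagonal ![l, μ, -l - μ] * U
        + a • diagonal ![l, μ, -l - μ] + b • !![α, γ, δ; γ, β, ε; δ, ε, -α - β] := by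
  obtain ⟨a, b, h00, h11⟩ := exists_eq_mul_add_mul_of_det_ne_zero hdet (P 0 0) (P 1 1)
  have hdiag : ∀ i, (P - a • diagonal ![l, μ, -l - μ]
      - b • !![α, γ, δ; γ, β, ε; δ, ε, -α - β]) i i = 0 := by
    rw [trace_fin_three] at hPtr
    intro i
    fin_cases i <;>
      simp only [Matrix.sub_apply, Matrix.smul_apply, diagonal_apply_eq, of_apply, smul_eq_mul,
        cons_val, Fin.zero_eta, Fin.mk_one, Fin.reduceFinMk] <;>
      linarith
  obtain ⟨U, hU, hUP⟩ := exists_skew_commutator_diagonal_eq hd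
    (by simp [hPT, transpose_symm_fin_three]) hdiag
  exact ⟨U, a, b, hU, by rw [hUP]; abel⟩

end FinThree

theorem stmt17 (l μ α β γ δ ε : ℝ)
    (h1 : l ≠ μ) (h2 : l ≠ -l - μ) (h3 : μ ≠ -l - μ) :
    ({P : Matrix (Fin 3) (Fin 3) ℝ |
        ∃ (U : Matrix (Fin 3) (Fin 3) ℝ) (a b : ℝ), Uᵀ = -U ∧
          P = (U * !![l, 0, 0; 0, μ, 0; 0, 0, -l - μ]
              - !![l, 0, 0; 0, μ, 0; 0, 0, -l - μ] * U)
            + a • !![l, 0, 0; 0, μ, 0; 0, 0, -l - μ]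
            + b • !![α, γ, δ; γ, β, ε; δ, ε, -α - β]}
      = {P : Matrix (Fin 3) (Fin 3) ℝ | Pᵀ = P ∧ P.trace = 0}) ↔
    α * μ - β * l ≠ 0 := by
  rw [show !![l, 0, 0; 0, μ, 0; 0, 0, -l - μ] = diagonal ![l, μ, -l - μ] from
    (diagonal_fin_three ![l, μ, -l - μ]).symm]
  constructor
  · intro hS hdet
    have hmem : diagonal ![μ, -l, l - μ] ∈ {P : Matrix (Fin 3) (Fin 3) ℝ | Pᵀ = P ∧ P.trace = 0} :=
      ⟨diagonal_transpose _, by simp [Fin.sum_univ_three]; ring⟩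
    obtain ⟨U, a, b, -, hP⟩ := hS ▸ hmem
    have key := mul_diag_sub_mul_diag_of_eq_commutator_add hP
    rw [hdet, mul_zero, diagonal_apply_eq, diagonal_apply_eq] at key
    obtain ⟨hμ, hl⟩ := mul_self_add_mul_self_eq_zero.mp (by simpa using key)
    exact h1 (hl.trans hμ.symm)
  · intro hdet
    have hd : Function.Injective ![l, μ, -l - μ] := by
      intro i j
      fin_cases i <;> fin_cases j <;> simp [h1, h2, h3, h1.symm, h2.symm, h3.symm]
    ext P
    refine ⟨?_, fun ⟨hPT, hPtr⟩ => exists_eq_commutator_add_of_det_ne_zero hd hdet hPT hPtr⟩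
    rintro ⟨U, a, b, hU, rfl⟩
    refine ⟨?_, ?_⟩
    · simp [transpose_commutator_diagonal hU, transpose_symm_fin_three]
    · rw [trace_add, trace_add, trace_commutator, trace_smul, trace_smul]
      simp [trace_fin_three, Fin.sum_univ_three]
end

section
/- Let γ = !![0,1,0; 1,0,0; 0,0,−1]. There is no k ∈ SO(3,ℂ) with γ·conj(k) = k, where conj denotes entrywise complex conjugation. Equivalently, γ is not of the form k·conj(k)⁻¹ for any k ∈ SO(3,ℂ). -/
/-!
The last row of `γ` is `-e₃`, so the last row of `k` satisfies `k₃ⱼ = -conj k₃ⱼ`, i.e. it is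
purely imaginary. The sum of squares of a purely imaginary vector is a nonpositive real, whereas
orthogonality (`k kᵀ = 1`) makes the sum of squares of every row equal to `1`.
-/

open Matrix

theorem Matrix.dotProduct_self_row_eq_one_of_transpose_mul_self_eq_one {n R : Type*} [Fintype n] [DecidableEq n] [CommRing R]
    {k : Matrix n n R} (hk : kᵀ * k = 1) (i : n) : k i ⬝ᵥ k i = 1 := by
  have hk' : k * kᵀ = 1 := mul_eq_one_comm.mp hk
  simpa [mul_apply, dotProduct] using congrFun (congrFun hk' i) i

theorem Complex.re_eq_zero_of_neg_conj_eq {z : ℂ} (hz : -(starRingEnd ℂ) z = z) : z.re = 0 := by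
  have := congrArg Complex.re hz
  simp only [Complex.neg_re, Complex.conj_re] at this
  linarith

theorem Complex.re_dotProduct_self_nonpos_of_re_eq_zero {n : Type*} [Fintype n] {v : n → ℂ}
    (hv : ∀ j, (v j).re = 0) : (v ⬝ᵥ v).re ≤ 0 := by
  simp only [dotProduct, Complex.re_sum, Complex.mul_re, hv, mul_zero, zero_sub]
  exact Finset.sum_nonpos fun j _ => neg_nonpos.mpr (mul_self_nonneg _)

theorem stmt19 :
    ¬ ∃ k : Matrix (Fin 3) (Fin 3) ℂ,
        kᵀ * k = 1 ∧ k.det = 1 ∧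
        !![(0 : ℂ), 1, 0; 1, 0, 0; 0, 0, -1] * k.map (starRingEnd ℂ) = k := by
  rintro ⟨k, horth, -, hconj⟩
  have hlast_imag : ∀ j, (k 2 j).re = 0 := fun j =>
    Complex.re_eq_zero_of_neg_conj_eq <| by
      simpa [mul_apply, Fin.sum_univ_three] using congrFun (congrFun hconj 2) j
  have hnonpos := Complex.re_dotProduct_self_nonpos_of_re_eq_zero hlast_imag
  rw [Matrix.dotProduct_self_row_eq_one_of_transpose_mul_self_eq_one horth 2] at hnonpos
  norm_num at hnonpos
end
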